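/- arXiv:1510.07202 — 2 statements merged into one kernel-verified Lean document; each statement's English description precedes it below -/
import Mathlib

section
/- If g is an order (viewed as a function ℕ → ℕ) that dominates all computable orders (i.e., for every computable order h, g(n) ≥ h(n) for almost every n), then g⁻¹ is an order that is dominated by all computable orders (i.e., for every computable order h, g⁻¹(n) ≤ h(n) for almost every n). -/
/-- An order: a non-decreasing, unbounded function `ℕ → ℕ` with value `0` at `0`. -/
def IsOrder (f : ℕ → ℕ) : Prop :=
  Monotone f ∧ (∀ m, ∃ n, m ≤ f n) ∧ f 0 = 0

/-- A computable order. -/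
def ComputableOrder (f : ℕ → ℕ) : Prop :=
  Computable f ∧ IsOrder f

/-- Generalized inverse of an order: `ordInv g k = min {m | g m ≥ k}`. -/
noncomputable def ordInv (g : ℕ → ℕ) (k : ℕ) : ℕ := sInf {m | k ≤ g m}

/-!
`ordInv g` is the lower adjoint of `g`, which makes it an order. For a computable order `h`, the
search `K m = ordInv h (m + 1)` (set to `0` at `0`) is again a computable order, with
`n < K (h n)`. If `g` dominates `K`, then for large `n` we get `n < K (h n) ≤ g (h n)`, that is,
`ordInv g n ≤ h n`.
-/

open Filter

section ordInv

variable {g : ℕ → ℕ}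

lemma ordInv_le_of_le {n m : ℕ} (h : n ≤ g m) : ordInv g n ≤ m :=
  Nat.sInf_le h

lemma ordInv_eq_find (hunb : ∀ n, ∃ m, n ≤ g m) (n : ℕ) :
    ordInv g n = Nat.find (hunb n) :=
  (Nat.sInf_def (hunb n)).trans (by congr)

lemma le_apply_ordInv (hunb : ∀ n, ∃ m, n ≤ g m) (n : ℕ) : n ≤ g (ordInv g n) :=
  Nat.sInf_mem (hunb n)

lemma galoisConnection_ordInv (hmono : Monotone g) (hunb : ∀ n, ∃ m, n ≤ g m) :
    GaloisConnection (ordInv g) g := fun n _ =>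
  ⟨fun h => (le_apply_ordInv hunb n).trans (hmono h), ordInv_le_of_le⟩

lemma lt_ordInv_succ_apply (hmono : Monotone g) (hunb : ∀ n, ∃ m, n ≤ g m) (n : ℕ) :
    n < ordInv g (g n + 1) :=
  (galoisConnection_ordInv hmono hunb).lt_iff_lt.2 (Nat.lt_succ_self _)

lemma IsOrder.ordInv (hg : IsOrder g) : IsOrder (ordInv g) := by
  obtain ⟨hmono, hunb, -⟩ := hg
  have gc := galoisConnection_ordInv hmono hunb
  exact ⟨gc.monotone_l, fun m => ⟨g m + 1, (lt_ordInv_succ_apply hmono hunb m).le⟩,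
    Nat.le_zero.1 (gc.le_iff_le.2 (Nat.zero_le _))⟩

lemma Computable.ordInv (hc : Computable g) (hunb : ∀ n, ∃ m, n ≤ g m) :
    Computable (ordInv g) := by
  have hsearch : Partrec fun n => Nat.rfind fun m => Part.some (decide (n ≤ g m)) :=
    Partrec.rfind <| (Primrec.nat_le.decide.to_comp.comp Computable.fst
      (hc.comp Computable.snd)).partrec.of_eq fun _ => rfl
  refine hsearch.of_eq_tot fun n => Nat.mem_rfind.2 ⟨?_, fun hm => ?_⟩
  · simpa [ordInv_eq_find hunb] using Nat.find_spec (hunb n)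
  · simpa using Nat.find_min (hunb n) (ordInv_eq_find hunb n ▸ hm)

end ordInv

lemma ComputableOrder.ordInv_succ {h : ℕ → ℕ} (hh : ComputableOrder h) :
    ComputableOrder fun m => if m = 0 then 0 else ordInv h (m + 1) := by
  obtain ⟨hc, hmono, hunb, -⟩ := hh
  have gc := galoisConnection_ordInv hmono hunb
  refine ⟨?_, fun a b hab => ?_, fun m => ⟨h m + 1, ?_⟩, if_pos rfl⟩
  · refine (Computable.cond (Primrec.eq.comp Primrec.id (Primrec.const 0)).decide.to_comp
      (Computable.const 0) ((hc.ordInv hunb).comp Computable.succ)).of_eq fun m => ?_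
    by_cases hm : m = 0 <;> simp [hm]
  · rcases eq_or_ne a 0 with rfl | ha
    · simp
    · have hb : b ≠ 0 := ((Nat.pos_of_ne_zero ha).trans_le hab).ne'
      simpa only [if_neg ha, if_neg hb] using gc.monotone_l (Nat.succ_le_succ hab)
  · dsimp only
    rw [if_neg (Nat.succ_ne_zero _)]
    exact (lt_ordInv_succ_apply hmono hunb m).le.trans (gc.monotone_l (Nat.le_succ _))

theorem stmt2 (g : ℕ → ℕ) (hg : IsOrder g)
    (hdom : ∀ h, ComputableOrder h → ∀ᶠ n in Filter.atTop, h n ≤ g n) :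
    IsOrder (ordInv g) ∧
      ∀ h, ComputableOrder h → ∀ᶠ n in Filter.atTop, ordInv g n ≤ h n := by
  refine ⟨hg.ordInv, fun h hh => ?_⟩
  obtain ⟨hmono, hunb, -⟩ := hh.2
  have htendsto : Tendsto h atTop atTop := tendsto_atTop_atTop_of_monotone hmono hunb
  filter_upwards [htendsto.eventually (hdom _ hh.ordInv_succ),
    htendsto.eventually (eventually_ne_atTop 0)] with n hK hpos
  rw [if_neg hpos] at hK
  exact ordInv_le_of_le ((lt_ordInv_succ_apply hmono hunb n).le.trans hK)
end

section
/- Let μ be a computable, continuous measure on 2^ω and let X be μ-Martin-Löf random. Then there is a constant c such that KA(X↾g_μ(n)) ≥ n − c for every n, and consequently KA(X↾n) ≥ g_μ⁻¹(n) − c for every n. -/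
open MeasureTheory
open Filter

/-- The length-`n` initial segment of an infinite binary sequence, as a list. -/
def strTake (X : ℕ → Bool) (n : ℕ) : List Bool := (List.range n).map X

/-- A semi-measure on binary strings: `m ε = 1`, nonnegative, and superadditive
on the two one-bit extensions. -/
def IsSemiMeasure (m : List Bool → ℝ) : Prop :=
  m [] = 1 ∧ (∀ σ, 0 ≤ m σ) ∧ ∀ σ, m (σ ++ [false]) + m (σ ++ [true]) ≤ m σ

/-- A function on strings is left-c.e. if it is the limit of a computable,
non-decreasing sequence of dyadic rational approximations from below. -/
def IsLeftCE (m : List Bool → ℝ) : Prop :=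
  ∃ f : List Bool × ℕ → ℕ, Computable f ∧
    (∀ σ, Monotone fun i => (f (σ, i) : ℝ) / 2 ^ i) ∧
    ∀ σ, Tendsto (fun i => (f (σ, i) : ℝ) / 2 ^ i) atTop (nhds (m σ))

/-- A universal left-c.e. semi-measure: multiplicatively dominates every
left-c.e. semi-measure. -/
def IsUniversalSemiMeasure (M : List Bool → ℝ) : Prop :=
  IsSemiMeasure M ∧ IsLeftCE M ∧
    ∀ ρ, IsSemiMeasure ρ → IsLeftCE ρ → ∃ c : ℕ, ∀ σ, ρ σ ≤ 2 ^ c * M σ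

/-- A priori complexity with respect to the semi-measure `M`: `KA σ = -log₂ M(σ)`. -/
noncomputable def KA (M : List Bool → ℝ) (σ : List Bool) : ℝ := - Real.logb 2 (M σ)


/-- The basic open cylinder of a binary string in Cantor space. -/
def cyl (σ : List Bool) : Set (ℕ → Bool) := {X | strTake X σ.length = σ}

/-- A measure on Cantor space is computable if the values of the cylinders can be
uniformly approximated to any precision `2⁻ⁱ` by a computable function
(with dyadic rational values `f(σ,i)/2ⁱ`). -/
def ComputableMeasure (μ : Measure (ℕ → Bool)) : Prop :=
  ∃ f : List Bool × ℕ → ℕ, Computable f ∧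
    ∀ σ i, |(μ (cyl σ)).toReal - (f (σ, i) : ℝ) / 2 ^ i| ≤ (2 : ℝ)⁻¹ ^ i

/-- A `μ`-Martin-Löf test: a uniformly c.e. sequence of sets of strings generating
open sets whose `μ`-measures are bounded by `2⁻ⁱ`. -/
def MLTest (μ : Measure (ℕ → Bool)) (V : ℕ → Set (List Bool)) : Prop :=
  REPred (fun p : ℕ × List Bool => p.2 ∈ V p.1) ∧
    ∀ i, μ (⋃ σ ∈ V i, cyl σ) ≤ 2⁻¹ ^ i

/-- `X` is `μ`-Martin-Löf random if it passes every `μ`-Martin-Löf test. -/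
def MLRandom (μ : Measure (ℕ → Bool)) (X : ℕ → Bool) : Prop :=
  ∀ V, MLTest μ V → ∃ i, X ∉ ⋃ σ ∈ V i, cyl σ

/-- The granularity of a (continuous) measure: the least `ℓ` such that every
string of length `ℓ` has cylinder of measure `< 2⁻ⁿ`. -/
noncomputable def granularity (μ : Measure (ℕ → Bool)) (n : ℕ) : ℕ :=
  sInf {l | ∀ σ : List Bool, σ.length = l → μ (cyl σ) < 2⁻¹ ^ n}

/-!
Along a `μ`-random `X`, a left-c.e. semi-measure `M` satisfies `M (X↾n) ≤ 2^c μ(X↾n)`: otherwise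
the sets `Vᵢ = {σ | 2^i μ(σ) < M(σ)}`, which are c.e. and have measure `≤ 2⁻ⁱ` by Kraft's
inequality for `M`, would form a Martin-Löf test capturing `X`. At length `g_μ(n)` every cylinder
has measure `< 2⁻ⁿ` (the granularity is finite: by Dini's theorem on the compact Cantor space the
cylinder measures of a continuous measure tend to `0` uniformly), so `KA(X↾g_μ(n)) ≥ n - c`.
The bound for `KA(X↾n)` follows since `KA` grows along `X` and `g_μ(g_μ⁻¹(n) - 1) < n`.
-/

open Topology

lemma strTake_length (X : ℕ → Bool) (n : ℕ) : (strTake X n).length = n := by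
  simp [strTake]

lemma strTake_take (X : ℕ → Bool) {l n : ℕ} (h : l ≤ n) :
    (strTake X n).take l = strTake X l := by
  simp [strTake, ← List.map_take, List.take_range, Nat.min_eq_left h]

lemma strTake_eq_strTake_iff {X Y : ℕ → Bool} {n : ℕ} :
    strTake X n = strTake Y n ↔ ∀ k < n, X k = Y k := by
  simp [strTake, List.map_inj_left]

lemma strTake_prefix (X : ℕ → Bool) {l n : ℕ} (h : l ≤ n) : strTake X l <+: strTake X n :=
  strTake_take X h ▸ List.take_prefix _ _

lemma exists_strTake_eq (σ : List Bool) : ∃ X, strTake X σ.length = σ :=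
  ⟨fun k => σ.getD k false,
    List.ext_getElem (strTake_length _ _) fun k _ hk => by
      simp [strTake, List.getElem?_eq_getElem hk]⟩

lemma mem_cyl_strTake (X : ℕ → Bool) (n : ℕ) : X ∈ cyl (strTake X n) := by
  simp [cyl, strTake_length]

lemma cyl_strTake (X : ℕ → Bool) (n : ℕ) : cyl (strTake X n) = PiNat.cylinder X n := by
  ext Y
  simp [cyl, strTake_length, strTake_eq_strTake_iff, PiNat.mem_cylinder_iff]

lemma iInter_cylinder (X : ℕ → Bool) : ⋂ n, PiNat.cylinder X n = {X} := by
  ext Y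
  simp only [Set.mem_iInter, PiNat.mem_cylinder_iff, Set.mem_singleton_iff]
  refine ⟨fun h => funext fun k => h (k + 1) k k.lt_succ_self, ?_⟩
  rintro rfl n k -
  rfl

lemma measurableSet_cylinder (X : ℕ → Bool) (n : ℕ) : MeasurableSet (PiNat.cylinder X n) := by
  rw [PiNat.cylinder_eq_pi]
  exact MeasurableSet.pi (Set.to_countable _) fun k _ => measurableSet_singleton _

section Granularity

variable (μ : Measure (ℕ → Bool))

lemma continuous_toReal_measure_cylinder (n : ℕ) :
    Continuous fun X => (μ (PiNat.cylinder X n)).toReal :=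
  IsLocallyConstant.continuous <| (IsLocallyConstant.iff_exists_open _).2 fun X =>
    ⟨PiNat.cylinder X n, PiNat.isOpen_cylinder _ X n, PiNat.self_mem_cylinder X n,
      fun _ hY => by rw [PiNat.mem_cylinder_iff_eq.1 hY]⟩

lemma tendsto_measure_cylinder [IsFiniteMeasure μ] (X : ℕ → Bool) :
    Tendsto (fun n => μ (PiNat.cylinder X n)) atTop (𝓝 (μ {X})) := by
  rw [← iInter_cylinder X]
  exact tendsto_measure_iInter_atTop (fun n => (measurableSet_cylinder X n).nullMeasurableSet)
    (fun _ _ h => PiNat.cylinder_anti X h) ⟨0, measure_ne_top μ _⟩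

/-- By Dini's theorem on the compact Cantor space, the measures of the cylinders of `X`, which
decrease pointwise to `μ {X} = 0`, do so uniformly in `X`. -/
lemma exists_forall_measure_cylinder_lt [IsFiniteMeasure μ] (hcont : ∀ X, μ {X} = 0) {ε : ℝ}
    (hε : 0 < ε) : ∃ n, ∀ X, (μ (PiNat.cylinder X n)).toReal < ε := by
  have hunif : TendstoUniformly (fun n X => (μ (PiNat.cylinder X n)).toReal) 0 atTop :=
    Antitone.tendstoUniformly_of_forall_tendsto (continuous_toReal_measure_cylinder μ)
      (fun _ _ h X => ENNReal.toReal_mono (measure_ne_top μ _)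
        (measure_mono (PiNat.cylinder_anti X h)))
      continuous_const
      (fun X => by
        simpa [hcont X, Function.comp_def] using
          (ENNReal.tendsto_toReal (measure_ne_top μ _)).comp (tendsto_measure_cylinder μ X))
  obtain ⟨n, hn⟩ := (Metric.tendstoUniformly_iff.1 hunif ε hε).exists
  exact ⟨n, fun X => by simpa using hn X⟩

lemma ENNReal.ofReal_inv_two_pow (n : ℕ) : ENNReal.ofReal ((2 : ℝ) ^ n)⁻¹ = 2⁻¹ ^ n := by
  rw [ENNReal.ofReal_inv_of_pos (by positivity), ENNReal.ofReal_pow zero_le_two, ENNReal.inv_pow]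
  simp

lemma measure_cyl_lt_of_length_eq_granularity [IsFiniteMeasure μ] (hcont : ∀ X, μ {X} = 0)
    (n : ℕ) {σ : List Bool} (hσ : σ.length = granularity μ n) : μ (cyl σ) < 2⁻¹ ^ n := by
  obtain ⟨l, hl⟩ :=
    exists_forall_measure_cylinder_lt μ hcont (ε := ((2 : ℝ) ^ n)⁻¹) (by positivity)
  refine Nat.sInf_mem (s := {l | ∀ σ : List Bool, σ.length = l → μ (cyl σ) < 2⁻¹ ^ n})
    ⟨l, fun τ hτ => ?_⟩ σ hσ
  obtain ⟨X, hX⟩ := exists_strTake_eq τ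
  rw [← hX, hτ, cyl_strTake, ← ENNReal.ofReal_inv_two_pow]
  exact (ENNReal.lt_ofReal_iff_toReal_lt (measure_ne_top μ _)).2 (hl X)

end Granularity

namespace IsSemiMeasure

variable {m : List Bool → ℝ}

lemma nonneg (hm : IsSemiMeasure m) (σ : List Bool) : 0 ≤ m σ := hm.2.1 σ

lemma le_of_prefix (hm : IsSemiMeasure m) {σ τ : List Bool} (h : σ <+: τ) : m τ ≤ m σ := by
  obtain ⟨ρ, rfl⟩ := h
  induction ρ using List.reverseRecOn with
  | nil => simp
  | append_singleton ρ b ih =>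
    have hsplit := hm.2.2 (σ ++ ρ)
    rw [← List.append_assoc]
    cases b
    · linarith [hm.nonneg (σ ++ ρ ++ [true])]
    · linarith [hm.nonneg (σ ++ ρ ++ [false])]

lemma le_one (hm : IsSemiMeasure m) (σ : List Bool) : m σ ≤ 1 :=
  hm.1 ▸ hm.le_of_prefix (List.nil_prefix (l := σ))

/-- Kraft's inequality for semi-measures; `k` bounds the depth of `S` below `τ` and drives the
induction. -/
lemma sum_le_of_prefixFree (hm : IsSemiMeasure m) (k : ℕ) {τ : List Bool}
    {S : Finset (List Bool)} (hS : ∀ σ ∈ S, τ <+: σ ∧ σ.length ≤ τ.length + k)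
    (hfree : ∀ σ ∈ S, ∀ σ' ∈ S, σ <+: σ' → σ = σ') : ∑ σ ∈ S, m σ ≤ m τ := by
  have of_subset_singleton {τ : List Bool} {S : Finset (List Bool)} :
      S ⊆ {τ} → ∑ σ ∈ S, m σ ≤ m τ := fun h =>
    (Finset.sum_le_sum_of_subset_of_nonneg h fun σ _ _ => hm.nonneg σ).trans_eq
      (Finset.sum_singleton _ _)
  induction k generalizing τ S with
  | zero =>
    exact of_subset_singleton fun σ hσ => Finset.mem_singleton.2
      ((hS σ hσ).1.eq_of_length (by have := (hS σ hσ).1.length_le; grind)).symm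
  | succ k ih =>
    by_cases hτ : τ ∈ S
    · exact of_subset_singleton fun σ hσ =>
        Finset.mem_singleton.2 (hfree τ hτ σ hσ (hS σ hσ).1).symm
    have hext : ∀ σ ∈ S, ∃ b, τ ++ [b] <+: σ := by
      intro σ hσ
      obtain ⟨⟨_ | ⟨b, ρ⟩, rfl⟩, -⟩ := hS σ hσ
      · exact absurd hσ (by simpa using hτ)
      · exact ⟨b, ρ, by simp⟩
    have hhalf : ∀ b (p : List Bool → Prop) [DecidablePred p],
        (∀ σ ∈ S, p σ → τ ++ [b] <+: σ) → ∑ σ ∈ S.filter p, m σ ≤ m (τ ++ [b]) :=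
      fun b p _ hp => ih
        (fun σ hσ => by
          rw [Finset.mem_filter] at hσ
          exact ⟨hp σ hσ.1 hσ.2, by simp; grind⟩)
        fun σ hσ σ' hσ' => hfree σ (Finset.mem_filter.1 hσ).1 σ' (Finset.mem_filter.1 hσ').1
    calc ∑ σ ∈ S, m σ
        = ∑ σ ∈ S.filter (τ ++ [false] <+: ·), m σ
          + ∑ σ ∈ S.filter (¬ τ ++ [false] <+: ·), m σ :=
          (Finset.sum_filter_add_sum_filter_not S _ _).symm
      _ ≤ m (τ ++ [false]) + m (τ ++ [true]) := by
          refine add_le_add (hhalf false _ fun _ _ h => h) (hhalf true _ fun σ hσ h => ?_)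
          obtain ⟨_ | _, hb⟩ := hext σ hσ
          exacts [absurd hb h, hb]
      _ ≤ m τ := hm.2.2 τ

end IsSemiMeasure

lemma isSemiMeasure_uniform : IsSemiMeasure fun σ => ((2 : ℝ) ^ σ.length)⁻¹ := by
  refine ⟨by simp, fun σ => by positivity, fun σ => ?_⟩
  simp only [List.length_append, List.length_singleton, pow_succ, mul_inv]
  linarith

lemma isLeftCE_uniform : IsLeftCE fun σ => ((2 : ℝ) ^ σ.length)⁻¹ := by
  have happrox (σ : List Bool) (i : ℕ) :
      (((if σ.length ≤ i then 2 ^ (i - σ.length) else 0 : ℕ) : ℝ) / 2 ^ i) =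
        if σ.length ≤ i then ((2 : ℝ) ^ σ.length)⁻¹ else 0 := by
    split_ifs with h
    · rw [Nat.cast_pow, Nat.cast_ofNat, div_eq_iff (by positivity), ← div_eq_inv_mul,
        eq_div_iff (by positivity), ← pow_add, Nat.sub_add_cancel h]
    · simp
  refine ⟨fun p => if p.1.length ≤ p.2 then 2 ^ (p.2 - p.1.length) else 0, ?_, fun σ => ?_,
    fun σ => ?_⟩
  · have hpow : Primrec₂ ((· ^ ·) : ℕ → ℕ → ℕ) := Primrec₂.unpaired'.mp Nat.Primrec.pow
    have hlen : Primrec fun p : List Bool × ℕ => p.1.length := Primrec.list_length.comp .fst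
    exact (Primrec.ite (Primrec.nat_le.comp hlen .snd)
      (hpow.comp (.const 2) (Primrec.nat_sub.comp .snd hlen)) (.const 0)).to_comp
  · intro i j hij
    simp only [happrox]
    split_ifs <;> first | positivity | omega | rfl
  · simp only [happrox]
    exact tendsto_atTop_of_eventually_const fun i hi => if_pos hi

lemma IsUniversalSemiMeasure.pos {M : List Bool → ℝ} (hM : IsUniversalSemiMeasure M)
    (σ : List Bool) : 0 < M σ := by
  obtain ⟨c, hc⟩ := hM.2.2 _ isSemiMeasure_uniform isLeftCE_uniform
  exact pos_of_mul_pos_right ((by positivity : (0 : ℝ) < (2 ^ σ.length)⁻¹).trans_le (hc σ))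
    (by positivity)

section KA

variable {M : List Bool → ℝ}

lemma KA_nonneg (hM : IsSemiMeasure M) (σ : List Bool) : 0 ≤ KA M σ :=
  neg_nonneg.2 (Real.logb_nonpos one_lt_two (hM.nonneg σ) (hM.le_one σ))

lemma KA_le_of_prefix (hM : IsSemiMeasure M) (hpos : ∀ σ, 0 < M σ) {σ τ : List Bool}
    (h : σ <+: τ) : KA M σ ≤ KA M τ :=
  neg_le_neg (Real.logb_le_logb_of_le one_lt_two (hpos τ) (hM.le_of_prefix h))

lemma sub_le_KA_of_le {σ : List Bool} (hpos : 0 < M σ) {c k : ℕ}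
    (h : M σ ≤ 2 ^ c * (2 ^ k)⁻¹) : (k : ℝ) - c ≤ KA M σ := by
  have hlog := Real.logb_le_logb_of_le one_lt_two hpos h
  rw [← div_eq_mul_inv, Real.logb_div (by positivity) (by positivity), Real.logb_pow,
    Real.logb_pow, Real.logb_self_eq_one one_lt_two] at hlog
  rw [KA]
  linarith

end KA

lemma lt_of_lt_ordInv {g : ℕ → ℕ} {n m : ℕ} (h : m < ordInv g n) : g m < n :=
  not_le.1 (Nat.notMem_of_lt_sInf (s := {m | n ≤ g m}) h)

/-- Comparing `r * x` with `y`, where `x` is known to precision `2⁻ʲ` and `y` is approximated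
from below, is semi-decidable from the approximations. -/
lemma exists_mul_approx_lt_iff {x y : ℝ} {u v : ℕ → ℕ} (r : ℕ)
    (hu : ∀ j, |x - u j / 2 ^ j| ≤ (2 : ℝ)⁻¹ ^ j)
    (hv_mono : Monotone fun j => (v j : ℝ) / 2 ^ j)
    (hv : Tendsto (fun j => (v j : ℝ) / 2 ^ j) atTop (𝓝 y)) :
    (∃ j, r * (u j + 1) < v j) ↔ r * x < y := by
  have hbracket (j : ℕ) :
      x ≤ ((u j : ℝ) + 1) / 2 ^ j ∧ ((u j : ℝ) + 1) / 2 ^ j ≤ x + 2 * (2 : ℝ)⁻¹ ^ j := by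
    have hsplit : ((u j : ℝ) + 1) / 2 ^ j = u j / 2 ^ j + (2 : ℝ)⁻¹ ^ j := by
      rw [add_div, one_div, inv_pow]
    rw [hsplit]
    constructor <;> linarith [abs_le.1 (hu j)]
  have hcast (j : ℕ) : r * (u j + 1) < v j ↔ r * (((u j : ℝ) + 1) / 2 ^ j) < v j / 2 ^ j := by
    rw [← mul_div_assoc, div_lt_div_iff_of_pos_right (by positivity)]
    exact_mod_cast Iff.rfl
  simp only [hcast]
  constructor
  · rintro ⟨j, hj⟩
    calc r * x ≤ r * (((u j : ℝ) + 1) / 2 ^ j) := by gcongr; exact (hbracket j).1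
      _ < v j / 2 ^ j := hj
      _ ≤ y := hv_mono.ge_of_tendsto hv j
  · intro hxy
    have hupper : Tendsto (fun j : ℕ => r * (x + 2 * (2 : ℝ)⁻¹ ^ j)) atTop (𝓝 (r * x)) := by
      have hpow := tendsto_pow_atTop_nhds_zero_of_lt_one (r := (2 : ℝ)⁻¹) (by norm_num)
        (by norm_num)
      simpa using ((hpow.const_mul 2).const_add x).const_mul (r : ℝ)
    obtain ⟨j, hj⟩ := (hupper.eventually_lt hv hxy).exists
    exact ⟨j, (mul_le_mul_of_nonneg_left (hbracket j).2 (by positivity)).trans_lt hj⟩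

lemma ComputablePred.rePred_exists {α : Type*} [Primcodable α] {p : α × ℕ → Prop}
    (hp : ComputablePred p) : REPred fun a => ∃ n, p (a, n) := by
  obtain ⟨_, hdec⟩ := hp
  have hsearch : Partrec fun a => Nat.rfind (PFun.lift fun n => decide (p (a, n))) :=
    Partrec.rfind hdec.partrec
  exact hsearch.dom_re.of_eq fun a => by simp [PFun.lift]

lemma rePred_exists_pow_mul_succ_lt {f g : List Bool × ℕ → ℕ} (hf : Computable f)
    (hg : Computable g) :
    REPred fun p : ℕ × List Bool => ∃ j, 2 ^ p.1 * (g (p.2, j) + 1) < f (p.2, j) := by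
  refine ComputablePred.rePred_exists (p := fun q : (ℕ × List Bool) × ℕ =>
    2 ^ q.1.1 * (g (q.1.2, q.2) + 1) < f (q.1.2, q.2)) (Computable.computablePred ?_)
  have hpow : Primrec₂ ((· ^ ·) : ℕ → ℕ → ℕ) := Primrec₂.unpaired'.mp Nat.Primrec.pow
  have harg : Computable fun q : (ℕ × List Bool) × ℕ => (q.1.2, q.2) :=
    .pair (.comp .snd .fst) .snd
  exact Primrec.nat_lt.decide.to_comp.comp (Primrec.nat_mul.to_comp.comp
    (hpow.to_comp.comp (.const 2) (.comp .fst .fst)) (Primrec.succ.to_comp.comp (hg.comp harg)))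
    (hf.comp harg)

lemma measure_biUnion_cyl_le (μ : Measure (ℕ → Bool)) {m : List Bool → ℝ}
    (hm : IsSemiMeasure m) (V : Set (List Bool)) {ε : ℝ} (hε : 0 ≤ ε)
    (hV : ∀ σ ∈ V, μ (cyl σ) ≤ ENNReal.ofReal (ε * m σ)) :
    μ (⋃ σ ∈ V, cyl σ) ≤ ENNReal.ofReal ε := by
  classical
  -- `V` can be replaced by its prefix-minimal elements, to which Kraft's inequality applies.
  set A : Set (List Bool) := {σ ∈ V | ∀ ρ ∈ V, ρ <+: σ → ρ = σ}
  have hcover : ⋃ σ ∈ V, cyl σ ⊆ ⋃ σ ∈ A, cyl σ := by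
    simp only [Set.subset_def, Set.mem_iUnion, exists_prop]
    rintro Y ⟨σ, hσV, hYσ⟩
    have hex : ∃ n, strTake Y n ∈ V :=
      ⟨σ.length, by rwa [show strTake Y σ.length = σ from hYσ]⟩
    refine ⟨strTake Y (Nat.find hex), ⟨Nat.find_spec hex, fun ρ hρV hρ => ?_⟩,
      mem_cyl_strTake Y _⟩
    have hlen : ρ.length ≤ Nat.find hex := strTake_length Y (Nat.find hex) ▸ hρ.length_le
    have hρY : ρ = strTake Y ρ.length := by
      rw [← strTake_take Y hlen, ← List.prefix_iff_eq_take.1 hρ]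
    have hmin : Nat.find hex ≤ ρ.length := Nat.find_min' hex (hρY ▸ hρV)
    rw [hρY, le_antisymm hlen hmin]
  have hkraft (s : Finset A) : ∑ σ ∈ s, μ (cyl σ) ≤ ENNReal.ofReal ε := by
    set S := s.map (Function.Embedding.subtype _)
    have hsum := hm.sum_le_of_prefixFree (S.sup List.length) (τ := [])
      (fun σ hσ => ⟨List.nil_prefix, by simpa using Finset.le_sup (f := List.length) hσ⟩)
      (fun σ hσ σ' hσ' h => by
        obtain ⟨a, -, rfl⟩ := Finset.mem_map.1 hσ
        obtain ⟨a', -, rfl⟩ := Finset.mem_map.1 hσ'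
        exact a'.2.2 a a.2.1 h)
    rw [Finset.sum_map, hm.1] at hsum
    calc ∑ σ ∈ s, μ (cyl σ) ≤ ∑ σ ∈ s, ENNReal.ofReal (ε * m σ) :=
          Finset.sum_le_sum fun σ _ => hV σ σ.2.1
      _ = ENNReal.ofReal (ε * ∑ σ ∈ s, m σ) := by
          rw [Finset.mul_sum]
          exact (ENNReal.ofReal_sum_of_nonneg fun σ _ => mul_nonneg hε (hm.nonneg _)).symm
      _ ≤ ENNReal.ofReal ε :=
          ENNReal.ofReal_le_ofReal (mul_le_of_le_one_right hε hsum)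
  calc μ (⋃ σ ∈ V, cyl σ) ≤ μ (⋃ σ ∈ A, cyl σ) := measure_mono hcover
    _ ≤ ∑' σ : A, μ (cyl σ) := measure_biUnion_le μ A.to_countable _
    _ ≤ ENNReal.ofReal ε := ENNReal.summable.tsum_le_of_sum_le hkraft

/-- The easy half of the Levin–Schnorr theorem: along a `μ`-random sequence, a left-c.e.
semi-measure is bounded by a constant multiple of `μ`. -/
theorem exists_le_mul_measure_of_mlRandom {M : List Bool → ℝ} (hM : IsSemiMeasure M)
    (hMce : IsLeftCE M) {μ : Measure (ℕ → Bool)} [IsFiniteMeasure μ]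
    (hμ : ComputableMeasure μ) {X : ℕ → Bool} (hX : MLRandom μ X) :
    ∃ i : ℕ, ∀ n, M (strTake X n) ≤ 2 ^ i * (μ (cyl (strTake X n))).toReal := by
  obtain ⟨f, hf, hf_mono, hf_lim⟩ := hMce
  obtain ⟨g, hg, hg_approx⟩ := hμ
  set V : ℕ → Set (List Bool) := fun i => {σ | ∃ j, 2 ^ i * (g (σ, j) + 1) < f (σ, j)}
  have hV (i : ℕ) (σ : List Bool) : σ ∈ V i ↔ 2 ^ i * (μ (cyl σ)).toReal < M σ := by
    simpa [V] using exists_mul_approx_lt_iff (2 ^ i) (hg_approx σ) (hf_mono σ) (hf_lim σ)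
  have htest : MLTest μ V := by
    refine ⟨rePred_exists_pow_mul_succ_lt hf hg, fun i => ?_⟩
    rw [← ENNReal.ofReal_inv_two_pow]
    refine measure_biUnion_cyl_le μ hM (V i) (by positivity) fun σ hσ => ?_
    rw [← ENNReal.ofReal_toReal (measure_ne_top μ (cyl σ))]
    exact ENNReal.ofReal_le_ofReal ((le_inv_mul_iff₀ (by positivity)).2 ((hV i σ).1 hσ).le)
  obtain ⟨i, hi⟩ := hX V htest
  exact ⟨i, fun n => not_lt.1 fun h =>
    hi (Set.mem_biUnion ((hV i _).2 h) (mem_cyl_strTake X n))⟩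

theorem stmt12 (M : List Bool → ℝ) (hM : IsUniversalSemiMeasure M)
    (μ : Measure (ℕ → Bool)) (hprob : IsProbabilityMeasure μ)
    (hcomp : ComputableMeasure μ) (hcont : ∀ Y : ℕ → Bool, μ {Y} = 0)
    (X : ℕ → Bool) (hX : MLRandom μ X) :
    ∃ c : ℕ, (∀ n : ℕ, (n : ℝ) - c ≤ KA M (strTake X (granularity μ n))) ∧
      ∀ n : ℕ, (ordInv (granularity μ) n : ℝ) - c ≤ KA M (strTake X n) := by
  obtain ⟨i, hi⟩ := exists_le_mul_measure_of_mlRandom hM.1 hM.2.1 hcomp hX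
  have hgran (n : ℕ) : (n : ℝ) - i ≤ KA M (strTake X (granularity μ n)) := by
    have hlt := measure_cyl_lt_of_length_eq_granularity μ hcont n (strTake_length X _)
    rw [← ENNReal.ofReal_inv_two_pow] at hlt
    exact sub_le_KA_of_le (hM.pos _)
      ((hi _).trans (by gcongr; exact ENNReal.toReal_le_of_le_ofReal (by positivity) hlt.le))
  refine ⟨i + 1, fun n => by push_cast; linarith [hgran n], fun n => ?_⟩
  cases h : ordInv (granularity μ) n with
  | zero =>
    push_cast
    linarith [KA_nonneg hM.1 (strTake X n)]
  | succ m =>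
    have hlt : granularity μ m < n := lt_of_lt_ordInv (g := granularity μ) (by omega)
    push_cast
    linarith [hgran m, KA_le_of_prefix hM.1 hM.pos (strTake_prefix X hlt.le)]
end
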